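/- arXiv:1911.05823 — 3 statements merged into one kernel-verified Lean document; each statement's English description precedes it below -/
import Mathlib

section
/- Coburn's theorem: if v is an isometry in a unital C*-algebra A with vv* ≠ 1, and T is the unilateral shift generating the Toeplitz algebra 𝒯 ⊂ B(ℓ²(ℕ)), then there exists a unique unital *-homomorphism φ : 𝒯 → A with φ(T) = v, and φ is isometric (injective). -/
/-!
Write a noncommutative polynomial in an isometry `w` in the normal form
`p(w) = ∑ c (m, n) w^m (w⋆)^n`; these words multiply as in the bicyclic monoid. For the shift
the coefficients are differences of matrix coefficients, so `‖c (m, n)‖ ≤ 2 ‖p(T)‖` and hence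
`‖p(v)‖ ≤ 2 |supp c| ‖p(T)‖`. Applied to `(p⋆p)^(2^k)`, whose support grows only polynomially
in `2^k`, together with `‖x^(2^k)‖ = ‖x‖^(2^k)` for selfadjoint `x`, this gives
`‖p(v)‖ ≤ ‖p(T)‖`, so `p(T) ↦ p(v)` extends to the C⋆-algebra generated by `T`.
With the nonzero projection `E = 1 - v v⋆`, `E (v⋆)^m φ(z) v^n E = ⟪f m, z (f n)⟫ E`, so `φ` is
injective, hence isometric; uniqueness holds since `T` generates.
-/

open ContinuousLinearMap

theorem le_of_forall_pow_two_pow_le {X Y K : ℝ} (hY : 0 ≤ Y)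
    (h : ∀ k : ℕ, X ^ 2 ^ k ≤ K * ((2 : ℝ) ^ k) ^ 2 * Y ^ 2 ^ k) : X ≤ Y := by
  by_contra! hXY
  rcases hY.eq_or_lt with rfl | hY
  · have h0 := h 0
    norm_num at h0
    linarith
  -- with `ρ = X / Y > 1`, the bound says `ρ ^ n ≤ K * n ^ 2` along `n = 2 ^ k`
  set ρ := X / Y
  have hρ : 1 < ρ := (one_lt_div hY).mpr hXY
  have hρk (k : ℕ) : ρ ^ 2 ^ k ≤ K * ((2 : ℝ) ^ k) ^ 2 := by
    rw [div_pow, div_le_iff₀ (by positivity)]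
    exact h k
  have hK : 0 < K := by
    have h0 := hρk 0
    norm_num at h0
    linarith
  have htend : Filter.Tendsto (fun k : ℕ => ((2 ^ k : ℕ) : ℝ) ^ 2 / ρ ^ 2 ^ k) Filter.atTop
      (nhds 0) :=
    (tendsto_pow_const_div_const_pow_of_one_lt 2 hρ).comp
      (tendsto_pow_atTop_atTop_of_one_lt one_lt_two)
  refine (one_div_pos.mpr hK).not_ge (ge_of_tendsto' htend fun k => ?_)
  rw [div_le_div_iff₀ hK (by positivity), one_mul]
  push_cast
  linarith [hρk k]

theorem IsSelfAdjoint.norm_le_norm_of_pow_two_pow_le {R S : Type*} [NormedRing R] [StarRing R]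
    [CStarRing R] [NormedRing S] [StarRing S] [CStarRing S] {x : R} {y : S} {K : ℝ}
    (hx : IsSelfAdjoint x) (hy : IsSelfAdjoint y)
    (h : ∀ k : ℕ, ‖x ^ 2 ^ k‖ ≤ K * ((2 : ℝ) ^ k) ^ 2 * ‖y ^ 2 ^ k‖) : ‖x‖ ≤ ‖y‖ :=
  le_of_forall_pow_two_pow_le (norm_nonneg y) fun k => by
    simpa only [hx.norm_pow_two_pow, hy.norm_pow_two_pow] using h k

theorem CStarRing.norm_le_one_of_star_mul_self_eq_one {R : Type*} [NormedRing R] [StarRing R]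
    [CStarRing R] {w : R} (hw : star w * w = 1) : ‖w‖ ≤ 1 := by
  rcases subsingleton_or_nontrivial R with _ | _
  · simp [Subsingleton.elim w 0]
  · have h : ‖w‖ * ‖w‖ = 1 := by rw [← CStarRing.norm_star_mul_self, hw, CStarRing.norm_one]
    nlinarith [norm_nonneg w]

theorem HilbertBasis.ext_inner {ι 𝕜 E : Type*} [RCLike 𝕜] [NormedAddCommGroup E]
    [InnerProductSpace 𝕜 E] (b : HilbertBasis ι 𝕜 E) {x y : E}
    (h : ∀ i, inner 𝕜 (b i) x = inner 𝕜 (b i) y) : x = y :=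
  b.repr.injective <| lp.ext <| funext fun i => by
    simp only [b.repr_apply_apply, h i]

theorem HilbertBasis.continuousLinearMap_ext_inner {ι 𝕜 E : Type*} [RCLike 𝕜]
    [NormedAddCommGroup E] [InnerProductSpace 𝕜 E] (b : HilbertBasis ι 𝕜 E) {X Y : E →L[𝕜] E}
    (h : ∀ i j, inner 𝕜 (b i) (X (b j)) = inner 𝕜 (b i) (Y (b j))) : X = Y := by
  refine ContinuousLinearMap.ext_on
    (Submodule.dense_iff_topologicalClosure_eq_top.mpr b.dense_span) ?_
  rintro _ ⟨j, rfl⟩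
  exact b.ext_inner fun i => h i j

instance StarAlgebra.elemental.instIsClosed {R A : Type*} [CommSemiring R] [StarRing R]
    [TopologicalSpace A] [Semiring A] [StarRing A] [IsSemitopologicalSemiring A]
    [ContinuousStar A] [Algebra R A] [StarModule R A] (x : A) :
    IsClosed (StarAlgebra.elemental R x : Set A) :=
  StarAlgebra.elemental.isClosed R x

namespace Toeplitz

/-- `(m, n)` stands for `w ^ m * (star w) ^ n`; this is the product of the bicyclic monoid,
which these words obey as soon as `star w * w = 1`. -/
def bicyclicMul (x y : ℕ × ℕ) : ℕ × ℕ :=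
  if x.2 ≤ y.1 then (x.1 + (y.1 - x.2), y.2) else (x.1, x.2 - y.1 + y.2)

theorem bicyclicMul_bicyclicMul_eq_zero_iff (m n : ℕ) (x : ℕ × ℕ) :
    bicyclicMul (bicyclicMul (0, m) x) (n, 0) = (0, 0) ↔
      x.1 ≤ m ∧ x.2 ≤ n ∧ m - x.1 = n - x.2 := by
  obtain ⟨p, q⟩ := x
  simp only [bicyclicMul]
  split_ifs <;> dsimp only at * <;> simp only [Prod.mk.injEq, and_true, true_and] <;> omega

section Monoid

variable {M : Type*} [Monoid M] [StarMul M] {w : M}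

def monomial (w : M) (x : ℕ × ℕ) : M := w ^ x.1 * star w ^ x.2

theorem star_pow_mul_pow_self (hw : star w * w = 1) (n : ℕ) : star w ^ n * w ^ n = 1 := by
  induction n with
  | zero => simp
  | succ n ih =>
    rw [pow_succ, pow_succ', mul_assoc, ← mul_assoc (star w), hw, one_mul, ih]

theorem star_pow_mul_pow (hw : star w * w = 1) (n p : ℕ) :
    star w ^ n * w ^ p = if n ≤ p then w ^ (p - n) else star w ^ (n - p) := by
  split_ifs with h
  · rw [← Nat.add_sub_of_le h, pow_add, ← mul_assoc, star_pow_mul_pow_self hw, one_mul,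
      Nat.add_sub_cancel_left]
  · rw [← Nat.sub_add_cancel (le_of_not_ge h), pow_add, mul_assoc, star_pow_mul_pow_self hw,
      mul_one, Nat.add_sub_cancel]

theorem monomial_mul_monomial (hw : star w * w = 1) (x y : ℕ × ℕ) :
    monomial w x * monomial w y = monomial w (bicyclicMul x y) := by
  simp only [monomial, bicyclicMul]
  rw [mul_assoc, ← mul_assoc (star w ^ x.2), star_pow_mul_pow hw]
  split_ifs <;> simp only [← mul_assoc, ← pow_add]

end Monoid

noncomputable section Algebra

variable {R : Type*} [Ring R] [StarRing R] [Algebra ℂ R] {w : R}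

def eval (w : R) : ((ℕ × ℕ) →₀ ℂ) →ₗ[ℂ] R := Finsupp.linearCombination ℂ (monomial w)

def conv (c c' : (ℕ × ℕ) →₀ ℂ) : (ℕ × ℕ) →₀ ℂ :=
  c.sum fun x a => c'.sum fun y b => Finsupp.single (bicyclicMul x y) (a * b)

def conj (c : (ℕ × ℕ) →₀ ℂ) : (ℕ × ℕ) →₀ ℂ :=
  c.sum fun x a => Finsupp.single x.swap (star a)

theorem eval_single (x : ℕ × ℕ) (a : ℂ) : eval w (Finsupp.single x a) = a • monomial w x :=
  Finsupp.linearCombination_single ℂ a x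

theorem eval_apply (c : (ℕ × ℕ) →₀ ℂ) : eval w c = c.sum fun x a => a • monomial w x :=
  Finsupp.linearCombination_apply ℂ c

theorem eval_single_zero (a : ℂ) : eval w (Finsupp.single (0, 0) a) = algebraMap ℂ R a := by
  simp [eval_single, monomial, Algebra.algebraMap_eq_smul_one]

theorem eval_single_one_zero : eval w (Finsupp.single (1, 0) 1) = w := by
  simp [eval_single, monomial]

theorem eval_conv (hw : star w * w = 1) (c c' : (ℕ × ℕ) →₀ ℂ) :
    eval w (conv c c') = eval w c * eval w c' := by
  rw [eval_apply c, eval_apply c', Finsupp.sum_mul, conv, map_finsuppSum]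
  refine Finsupp.sum_congr fun x _ => ?_
  rw [map_finsuppSum, Finsupp.mul_sum]
  refine Finsupp.sum_congr fun y _ => ?_
  rw [eval_single, smul_mul_smul_comm, monomial_mul_monomial hw]

theorem eval_conj [StarModule ℂ R] (c : (ℕ × ℕ) →₀ ℂ) : eval w (conj c) = star (eval w c) := by
  simp only [conj, Finsupp.sum, map_sum, eval_single, eval_apply c, star_sum, star_smul,
    monomial, star_mul, star_pow, star_star, Prod.fst_swap, Prod.snd_swap]

theorem eval_conv_conj_self [StarModule ℂ R] (hw : star w * w = 1) (c : (ℕ × ℕ) →₀ ℂ) :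
    eval w (conv (conj c) c) = star (eval w c) * eval w c := by
  rw [eval_conv hw, eval_conj]

end Algebra

section Defect

variable {R : Type*} [Ring R] [StarRing R] {w : R}

def defect (w : R) : R := 1 - w * star w

theorem defect_mul_self (hw : star w * w = 1) : defect w * defect w = defect w := by
  simp only [defect, mul_sub, sub_mul, one_mul, mul_one, mul_assoc, ← mul_assoc (star w), hw]
  abel

theorem defect_mul_pow (hw : star w * w = 1) (k : ℕ) :
    defect w * w ^ k = if k = 0 then defect w else 0 := by
  rcases k with _ | k
  · simp
  · rw [if_neg k.succ_ne_zero, pow_succ', ← mul_assoc, defect, sub_mul, one_mul, mul_assoc, hw,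
      mul_one, sub_self, zero_mul]

theorem star_pow_mul_defect (hw : star w * w = 1) (k : ℕ) :
    star w ^ k * defect w = if k = 0 then defect w else 0 := by
  rcases k with _ | k
  · simp
  · rw [if_neg k.succ_ne_zero, pow_succ, mul_assoc, defect, mul_sub, mul_one, ← mul_assoc, hw,
      one_mul, sub_self, mul_zero]

theorem defect_mul_monomial_mul_defect (hw : star w * w = 1) (x : ℕ × ℕ) :
    defect w * monomial w x * defect w = if x = (0, 0) then defect w else 0 := by
  obtain ⟨p, q⟩ := x
  rw [monomial, ← mul_assoc, mul_assoc _ _ (defect w), defect_mul_pow hw,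
    star_pow_mul_defect hw]
  by_cases hp : p = 0 <;> by_cases hq : q = 0 <;> simp [hp, hq, defect_mul_self hw]

theorem star_pow_mul_monomial_mul_pow (hw : star w * w = 1) (m n : ℕ) (x : ℕ × ℕ) :
    star w ^ m * monomial w x * w ^ n =
      monomial w (bicyclicMul (bicyclicMul (0, m) x) (n, 0)) := by
  have hm : star w ^ m = monomial w (0, m) := by simp [monomial]
  have hn : w ^ n = monomial w (n, 0) := by simp [monomial]
  rw [hm, hn, monomial_mul_monomial hw, monomial_mul_monomial hw]

end Defect

noncomputable section DiagSum

/-- For the unilateral shift this is the matrix coefficient `⟪f m, eval T c (f n)⟫`. -/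
def diagSum (m n : ℕ) : ((ℕ × ℕ) →₀ ℂ) →ₗ[ℂ] ℂ :=
  ∑ j ∈ Finset.range (min m n + 1), Finsupp.lapply (m - j, n - j)

theorem diagSum_apply (m n : ℕ) (c : (ℕ × ℕ) →₀ ℂ) :
    diagSum m n c = ∑ j ∈ Finset.range (min m n + 1), c (m - j, n - j) := by
  simp [diagSum]

theorem diagSum_zero_left (n : ℕ) (c : (ℕ × ℕ) →₀ ℂ) : diagSum 0 n c = c (0, n) := by
  simp [diagSum_apply]

theorem diagSum_zero_right (m : ℕ) (c : (ℕ × ℕ) →₀ ℂ) : diagSum m 0 c = c (m, 0) := by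
  simp [diagSum_apply]

theorem diagSum_succ_succ (m n : ℕ) (c : (ℕ × ℕ) →₀ ℂ) :
    diagSum (m + 1) (n + 1) c = c (m + 1, n + 1) + diagSum m n c := by
  rw [diagSum_apply, diagSum_apply, Nat.add_min_add_right, Finset.sum_range_succ', add_comm]
  simp

theorem diagSum_single_one (m n : ℕ) (x : ℕ × ℕ) :
    diagSum m n (Finsupp.single x 1) =
      if bicyclicMul (bicyclicMul (0, m) x) (n, 0) = (0, 0) then 1 else 0 := by
  simp only [bicyclicMul_bicyclicMul_eq_zero_iff, diagSum_apply, Finsupp.single_apply]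
  split_ifs with h
  · rw [Finset.sum_eq_single (m - x.1)]
    · rw [if_pos (by ext <;> simp <;> omega)]
    · intro j hj hne
      rw [if_neg]
      intro hx
      simp only [Finset.mem_range, Prod.ext_iff] at hj hx
      omega
    · intro hx
      simp only [Finset.mem_range] at hx
      omega
  · refine Finset.sum_eq_zero fun j hj => if_neg ?_
    intro hx
    simp only [Finset.mem_range, Prod.ext_iff] at hj hx
    omega

theorem norm_apply_le_of_norm_diagSum_le {c : (ℕ × ℕ) →₀ ℂ} {C : ℝ}
    (h : ∀ m n, ‖diagSum m n c‖ ≤ C) (x : ℕ × ℕ) : ‖c x‖ ≤ 2 * C := by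
  have hC : 0 ≤ C := (norm_nonneg _).trans (h 0 0)
  obtain ⟨_ | m, _ | n⟩ := x
  · rw [← diagSum_zero_left]; linarith [h 0 0]
  · rw [← diagSum_zero_left]; linarith [h 0 (n + 1)]
  · rw [← diagSum_zero_right]; linarith [h (m + 1) 0]
  · rw [eq_sub_of_add_eq (diagSum_succ_succ m n c).symm]
    linarith [norm_sub_le (diagSum (m + 1) (n + 1) c) (diagSum m n c), h (m + 1) (n + 1), h m n]

end DiagSum

theorem defect_mul_star_pow_eval_pow_mul_defect {R : Type*} [Ring R] [StarRing R] [Algebra ℂ R]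
    {w : R} (hw : star w * w = 1) (m n : ℕ) (c : (ℕ × ℕ) →₀ ℂ) :
    defect w * (star w ^ m * eval w c * w ^ n) * defect w = diagSum m n c • defect w := by
  induction c using Finsupp.induction_linear with
  | zero => simp
  | add c c' hc hc' => simp only [map_add, mul_add, add_mul, hc, hc', add_smul]
  | single x a =>
    rw [eval_single, mul_smul_comm, smul_mul_assoc, mul_smul_comm, smul_mul_assoc,
      star_pow_mul_monomial_mul_pow hw, defect_mul_monomial_mul_defect hw,
      ← Finsupp.smul_single_one, map_smul, diagSum_single_one, smul_eq_mul, mul_smul]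
    split_ifs <;> simp

section Box

def BoxSupported (c : (ℕ × ℕ) →₀ ℂ) (D : ℕ) : Prop :=
  c.support ⊆ Finset.range D ×ˢ Finset.range D

variable {c c' : (ℕ × ℕ) →₀ ℂ} {D D' : ℕ}

theorem BoxSupported.card_support_le (h : BoxSupported c D) : c.support.card ≤ D ^ 2 := by
  simpa [sq] using Finset.card_le_card h

theorem exists_boxSupported (c : (ℕ × ℕ) →₀ ℂ) : ∃ D, BoxSupported c D := by
  refine ⟨(c.support.sup fun x => max x.1 x.2) + 1, fun x hx => ?_⟩
  have := Finset.le_sup (f := fun x : ℕ × ℕ => max x.1 x.2) hx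
  simp only [Finset.mem_product, Finset.mem_range]
  omega

theorem BoxSupported.conv (h : BoxSupported c D) (h' : BoxSupported c' D') :
    BoxSupported (conv c c') (D + D') := by
  classical
  intro x hx
  obtain ⟨y, hy, hx⟩ := Finset.mem_biUnion.mp (Finsupp.support_sum hx)
  obtain ⟨z, hz, hx⟩ := Finset.mem_biUnion.mp (Finsupp.support_sum hx)
  obtain rfl := Finset.mem_singleton.mp (Finsupp.support_single_subset hx)
  have hy := h hy
  have hz := h' hz
  simp only [Finset.mem_product, Finset.mem_range] at hy hz ⊢
  unfold bicyclicMul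
  split_ifs <;> dsimp only <;> omega

theorem boxSupported_iterate_conv_self (h : BoxSupported c D) (k : ℕ) :
    BoxSupported ((fun d => conv d d)^[k] c) (2 ^ k * D) := by
  induction k with
  | zero => simpa using h
  | succ k ih =>
    rw [Function.iterate_succ_apply', pow_succ, mul_comm _ 2, mul_assoc, two_mul]
    exact ih.conv ih

end Box

theorem eval_iterate_conv_self {R : Type*} [Ring R] [StarRing R] [Algebra ℂ R] {w : R}
    (hw : star w * w = 1) (c : (ℕ × ℕ) →₀ ℂ) (k : ℕ) :
    eval w ((fun d => conv d d)^[k] c) = eval w c ^ 2 ^ k := by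
  induction k with
  | zero => simp
  | succ k ih =>
    rw [Function.iterate_succ_apply', eval_conv hw, ih, ← pow_add, ← two_mul, pow_succ']

section Norm

variable {R : Type*} [NormedRing R] [StarRing R] [CStarRing R] {w : R}

theorem norm_monomial_le_one (hw : star w * w = 1) (x : ℕ × ℕ) : ‖monomial w x‖ ≤ 1 := by
  have hpow (n : ℕ) : ‖w ^ n‖ ≤ 1 := by
    refine CStarRing.norm_le_one_of_star_mul_self_eq_one ?_
    rw [star_pow, star_pow_mul_pow_self hw]
  calc ‖monomial w x‖ ≤ ‖w ^ x.1‖ * ‖star (w ^ x.2)‖ := by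
        rw [monomial, star_pow]; exact norm_mul_le _ _
    _ ≤ 1 * 1 := by
        rw [norm_star]
        exact mul_le_mul (hpow _) (hpow _) (norm_nonneg _) zero_le_one
    _ = 1 := one_mul 1

theorem norm_eval_le_sum [NormedAlgebra ℂ R] (hw : star w * w = 1) (c : (ℕ × ℕ) →₀ ℂ) :
    ‖eval w c‖ ≤ ∑ x ∈ c.support, ‖c x‖ := by
  rw [eval_apply, Finsupp.sum]
  refine (norm_sum_le _ _).trans (Finset.sum_le_sum fun x _ => ?_)
  rw [norm_smul]
  exact mul_le_of_le_one_right (norm_nonneg _) (norm_monomial_le_one hw x)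

end Norm

section Contraction

variable {R S : Type*} [NormedRing R] [StarRing R] [NormedAlgebra ℂ R]
  [NormedRing S] [StarRing S] [CStarRing S] [NormedAlgebra ℂ S] {w : R} {v : S}

theorem norm_eval_le_of_boxSupported (hv : star v * v = 1) {c : (ℕ × ℕ) →₀ ℂ} {D : ℕ} {K : ℝ}
    (hcoef : ∀ x, ‖c x‖ ≤ K * ‖eval w c‖) (hc : BoxSupported c D) :
    ‖eval v c‖ ≤ D ^ 2 * (K * ‖eval w c‖) :=
  calc ‖eval v c‖ ≤ ∑ x ∈ c.support, ‖c x‖ := norm_eval_le_sum hv c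
    _ ≤ ∑ _x ∈ c.support, K * ‖eval w c‖ := Finset.sum_le_sum fun x _ => hcoef x
    _ = c.support.card * (K * ‖eval w c‖) := by rw [Finset.sum_const, nsmul_eq_mul]
    _ ≤ D ^ 2 * (K * ‖eval w c‖) :=
      mul_le_mul_of_nonneg_right (by exact_mod_cast hc.card_support_le)
        ((norm_nonneg _).trans (hcoef 0))

theorem norm_eval_le_of_norm_coeff_le [CStarRing R] [StarModule ℂ R] [StarModule ℂ S]
    (hw : star w * w = 1) (hv : star v * v = 1) {K : ℝ}
    (hcoef : ∀ (c : (ℕ × ℕ) →₀ ℂ) x, ‖c x‖ ≤ K * ‖eval w c‖)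
    (c : (ℕ × ℕ) →₀ ℂ) : ‖eval v c‖ ≤ ‖eval w c‖ := by
  set a := conv (conj c) c
  obtain ⟨D, hD⟩ := exists_boxSupported a
  have key : ‖star (eval v c) * eval v c‖ ≤ ‖star (eval w c) * eval w c‖ := by
    refine (IsSelfAdjoint.star_mul_self _).norm_le_norm_of_pow_two_pow_le
      (IsSelfAdjoint.star_mul_self _) (K := D ^ 2 * K) fun k => ?_
    rw [← eval_conv_conj_self hv, ← eval_conv_conj_self hw, ← eval_iterate_conv_self hv,
      ← eval_iterate_conv_self hw]
    calc _ ≤ ((2 ^ k * D : ℕ) : ℝ) ^ 2 * (K * ‖eval w ((fun d => conv d d)^[k] a)‖) :=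
          norm_eval_le_of_boxSupported hv (hcoef _) (boxSupported_iterate_conv_self hD k)
      _ = _ := by push_cast; ring
  rw [CStarRing.norm_star_mul_self, CStarRing.norm_star_mul_self] at key
  exact (mul_self_le_mul_self_iff (norm_nonneg _) (norm_nonneg _)).mpr key

end Contraction

theorem pow_apply_zero_of_shift {E : Type*} [TopologicalSpace E] [AddCommMonoid E] [Module ℂ E]
    {f : ℕ → E} {T : E →L[ℂ] E} (hT : ∀ k, T (f k) = f (k + 1)) (n : ℕ) :
    (T ^ n) (f 0) = f n := by
  induction n with
  | zero => simp
  | succ n ih => rw [pow_succ', mul_apply_eq_comp, ih, hT]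

section Shift

variable {H : Type*} [NormedAddCommGroup H] [InnerProductSpace ℂ H] [CompleteSpace H]
  (f : HilbertBasis ℕ ℂ H) {T : H →L[ℂ] H} (hT : ∀ k, T (f k) = f (k + 1))
include hT

theorem star_mul_self_of_shift : star T * T = 1 := by
  refine f.continuousLinearMap_ext_inner fun i j => ?_
  rw [mul_apply_eq_comp, star_eq_adjoint, adjoint_inner_right, hT, hT, one_apply_eq_self,
    orthonormal_iff_ite.mp f.orthonormal, orthonormal_iff_ite.mp f.orthonormal]
  simp

theorem star_apply_zero_of_shift : star T (f 0) = 0 := by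
  refine f.ext_inner fun i => ?_
  rw [star_eq_adjoint, adjoint_inner_right, hT, orthonormal_iff_ite.mp f.orthonormal,
    inner_zero_right]
  simp

theorem inner_eval_of_shift (c : (ℕ × ℕ) →₀ ℂ) (m n : ℕ) :
    inner ℂ (f m) (eval T c (f n)) = diagSum m n c := by
  have hE (z : H) : defect T z = z - T (star T z) := by simp [defect]
  have hEinner (z : H) : inner ℂ (f 0) (defect T z) = inner ℂ (f 0) z := by
    rw [hE, inner_sub_right, ← adjoint_inner_left, ← star_eq_adjoint,
      star_apply_zero_of_shift f hT, inner_zero_left, sub_zero]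
  have hE0 : defect T (f 0) = f 0 := by
    rw [hE, star_apply_zero_of_shift f hT, T.map_zero, sub_zero]
  calc inner ℂ (f m) (eval T c (f n))
      = inner ℂ (f 0) ((defect T * (star T ^ m * eval T c * T ^ n) * defect T) (f 0)) := by
        simp only [mul_apply_eq_comp, hE0, hEinner, pow_apply_zero_of_shift hT]
        rw [← star_pow, star_eq_adjoint, adjoint_inner_right, pow_apply_zero_of_shift hT]
    _ = diagSum m n c := by
        rw [defect_mul_star_pow_eval_pow_mul_defect (star_mul_self_of_shift f hT), smul_apply,
          hE0, inner_smul_right, inner_self_eq_norm_sq_to_K, f.orthonormal.1 0]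
        simp

theorem norm_coeff_le_of_shift (c : (ℕ × ℕ) →₀ ℂ) (x : ℕ × ℕ) : ‖c x‖ ≤ 2 * ‖eval T c‖ := by
  refine norm_apply_le_of_norm_diagSum_le (fun m n => ?_) x
  rw [← inner_eval_of_shift f hT]
  calc ‖inner ℂ (f m) (eval T c (f n))‖ ≤ ‖f m‖ * (‖eval T c‖ * ‖f n‖) :=
        (norm_inner_le_norm _ _).trans (mul_le_mul_of_nonneg_left ((eval T c).le_opNorm _)
          (norm_nonneg _))
    _ = ‖eval T c‖ := by rw [f.orthonormal.1 m, f.orthonormal.1 n, one_mul, mul_one]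

end Shift

section Elemental

open StarAlgebra

variable {B : Type*} [CStarAlgebra B] {w : B}

theorem eval_mem_elemental (w : B) (c : (ℕ × ℕ) →₀ ℂ) : eval w c ∈ elemental ℂ w := by
  rw [eval_apply]
  refine sum_mem fun x _ => SMulMemClass.smul_mem _ ?_
  exact mul_mem (pow_mem (elemental.self_mem ℂ w) _) (pow_mem (elemental.star_self_mem ℂ w) _)

theorem adjoin_subset_range_eval (hw : star w * w = 1) :
    (adjoin ℂ {w} : Set B) ⊆ Set.range (eval w) := by
  intro x hx
  induction hx using StarAlgebra.adjoin_induction with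
  | mem x hx =>
    obtain rfl := Set.mem_singleton_iff.mp hx
    exact ⟨_, eval_single_one_zero⟩
  | algebraMap r => exact ⟨_, eval_single_zero r⟩
  | add x y _ _ hx hy =>
    obtain ⟨c, rfl⟩ := hx
    obtain ⟨c', rfl⟩ := hy
    exact ⟨c + c', map_add _ _ _⟩
  | mul x y _ _ hx hy =>
    obtain ⟨c, rfl⟩ := hx
    obtain ⟨c', rfl⟩ := hy
    exact ⟨conv c c', eval_conv hw c c'⟩
  | star x _ hx =>
    obtain ⟨c, rfl⟩ := hx
    exact ⟨conj c, eval_conj c⟩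

noncomputable def evalElemental (w : B) : ((ℕ × ℕ) →₀ ℂ) →ₗ[ℂ] elemental ℂ w where
  toFun c := ⟨eval w c, eval_mem_elemental w c⟩
  map_add' _ _ := Subtype.ext (map_add _ _ _)
  map_smul' _ _ := Subtype.ext (map_smul _ _ _)

@[simp]
theorem coe_evalElemental (c : (ℕ × ℕ) →₀ ℂ) : (evalElemental w c : B) = eval w c := rfl

theorem evalElemental_conv (hw : star w * w = 1) (c c' : (ℕ × ℕ) →₀ ℂ) :
    evalElemental w (conv c c') = evalElemental w c * evalElemental w c' :=
  Subtype.ext (eval_conv hw c c')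

theorem evalElemental_conj (c : (ℕ × ℕ) →₀ ℂ) :
    evalElemental w (conj c) = star (evalElemental w c) :=
  Subtype.ext (eval_conj c)

theorem evalElemental_single_zero_one : evalElemental w (Finsupp.single (0, 0) 1) = 1 :=
  Subtype.ext (by simp [eval_single_zero])

theorem evalElemental_single_one_zero :
    evalElemental w (Finsupp.single (1, 0) 1) = ⟨w, elemental.self_mem ℂ w⟩ :=
  Subtype.ext eval_single_one_zero

theorem denseRange_evalElemental (hw : star w * w = 1) : DenseRange (evalElemental w) := by
  refine Subtype.dense_iff.mpr ?_
  rw [← Set.range_comp]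
  exact closure_mono (adjoin_subset_range_eval hw)

theorem exists_starAlgHom_elemental {A : Type*} [CStarAlgebra A] {v : A} (hw : star w * w = 1)
    (hv : star v * v = 1) (hle : ∀ c, ‖eval v c‖ ≤ ‖eval w c‖) :
    ∃ φ : elemental ℂ w →⋆ₐ[ℂ] A, ∀ c, φ (evalElemental w c) = eval v c := by
  have hdense := denseRange_evalElemental hw
  set φ := (eval v).extendOfNorm (evalElemental w)
  have hφ (c) : φ (evalElemental w c) = eval v c :=
    LinearMap.extendOfNorm_eq hdense ⟨1, fun c => (one_mul ‖eval w c‖).symm ▸ hle c⟩ c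
  have hmul (x y : elemental ℂ w) : φ (x * y) = φ x * φ y := by
    refine hdense.induction_on₂ (isClosed_eq (by fun_prop) (by fun_prop)) (fun c c' => ?_) x y
    rw [← evalElemental_conv hw, hφ, hφ, hφ, eval_conv hv]
  have hstar (x : elemental ℂ w) : φ (star x) = star (φ x) := by
    refine hdense.induction_on x (isClosed_eq (by fun_prop) (by fun_prop)) (fun c => ?_)
    rw [← evalElemental_conj, hφ, hφ, eval_conj]
  have hone : φ 1 = 1 := by
    rw [← evalElemental_single_zero_one, hφ, eval_single_zero, map_one]
  exact ⟨{ AlgHom.ofLinearMap φ.toLinearMap hone hmul with map_star' := hstar }, hφ⟩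

end Elemental

open StarAlgebra CStarAlgebra in
theorem injective_of_shift {H : Type*} [NormedAddCommGroup H] [InnerProductSpace ℂ H]
    [CompleteSpace H] (f : HilbertBasis ℕ ℂ H) {T : H →L[ℂ] H} (hT : ∀ k, T (f k) = f (k + 1))
    {A : Type*} [CStarAlgebra A] {v : A} (hv : star v * v = 1) (hnu : v * star v ≠ 1)
    (φ : elemental ℂ T →⋆ₐ[ℂ] A) (hφ : ∀ c, φ (evalElemental T c) = eval v c) :
    Function.Injective φ := by
  have hcorner (z : elemental ℂ T) (m n : ℕ) :
      defect v * (star v ^ m * φ z * v ^ n) * defect v =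
        inner ℂ (f m) ((z : H →L[ℂ] H) (f n)) • defect v := by
    refine (denseRange_evalElemental (star_mul_self_of_shift f hT)).induction_on z
      (isClosed_eq (by fun_prop) (by fun_prop)) fun c => ?_
    rw [hφ, defect_mul_star_pow_eval_pow_mul_defect hv, coe_evalElemental,
      inner_eval_of_shift f hT]
  have hE : defect v ≠ 0 := sub_ne_zero.mpr hnu.symm
  refine (injective_iff_map_eq_zero φ).mpr fun z hz =>
    Subtype.ext (f.continuousLinearMap_ext_inner fun m n => ?_)
  have h := hcorner z m n
  simp only [hz, mul_zero, zero_mul] at h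
  simpa [hE] using h.symm

end Toeplitz

/-- Coburn's theorem: let `T` be the unilateral shift (`T fₖ = f_{k+1}` for an
orthonormal basis of `ℓ²(ℕ)`) and `𝒯` the Toeplitz algebra, i.e. the smallest closed
*-subalgebra of `B(ℓ²(ℕ))` containing `T`.  If `v` is an isometry (`v*v = 1`) in a
unital C*-algebra `A` with `vv* ≠ 1`, then there is a unique unital *-homomorphism
`φ : 𝒯 → A` with `φ(T) = v`, and `φ` is isometric. -/
theorem coburn_theorem
    {H : Type*} [NormedAddCommGroup H] [InnerProductSpace ℂ H] [CompleteSpace H]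
    (f : HilbertBasis ℕ ℂ H) (T : H →L[ℂ] H)
    (hT : ∀ k : ℕ, T (f k) = f (k + 1))
    {A : Type*} [NormedRing A] [StarRing A] [CStarRing A] [CompleteSpace A]
    [NormedAlgebra ℂ A] [StarModule ℂ A]
    (v : A) (hv : star v * v = 1) (hnu : v * star v ≠ 1)
    (𝒯 : StarSubalgebra ℂ (H →L[ℂ] H))
    (h𝒯 : 𝒯 = (StarAlgebra.adjoin ℂ ({T} : Set (H →L[ℂ] H))).topologicalClosure)
    (hTmem : T ∈ 𝒯) :
    ∃ φ : 𝒯 →⋆ₐ[ℂ] A,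
      φ ⟨T, hTmem⟩ = v ∧ Isometry φ ∧
      ∀ ψ : 𝒯 →⋆ₐ[ℂ] A, ψ ⟨T, hTmem⟩ = v → ψ = φ := by
  open Toeplitz CStarAlgebra in
  obtain rfl : 𝒯 = StarAlgebra.elemental ℂ T := h𝒯
  let : CStarAlgebra A := {}
  have hT₁ := star_mul_self_of_shift f hT
  obtain ⟨φ, hφ⟩ := exists_starAlgHom_elemental hT₁ hv
    (norm_eval_le_of_norm_coeff_le hT₁ hv (norm_coeff_le_of_shift f hT))
  have hφT : φ ⟨T, hTmem⟩ = v := by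
    rw [← evalElemental_single_one_zero, hφ, eval_single_one_zero]
  refine ⟨φ, hφT, NonUnitalStarAlgHom.isometry φ (injective_of_shift f hT hv hnu φ hφ),
    fun ψ hψ => ?_⟩
  exact StarAlgebra.elemental.starAlgHomClass_ext ℂ (map_continuous ψ) (map_continuous φ)
    (hψ.trans hφT.symm)
end

section
/- For continuous functions f, g on S¹, the Toeplitz operators T_f = P M_f P and T_g on the Hardy space H²(S¹) satisfy: T_f T_g - T_{fg} is a compact operator, and T_f is compact if and only if f = 0. -/
/-!
The Hankel operator `(1 - P) M_f P` is compact for every continuous `f`: for a monomial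
`f = e_k` it vanishes on all basis vectors `e_n` except the finitely many with `0 ≤ n < -k`,
and it depends continuously on `f`, so compactness passes to the closure of the trigonometric
polynomials. As `P` is idempotent, `T_f T_g - T_{fg} = -P M_f (1 - P) M_g P` is then compact.
Conversely, a compact operator maps the orthonormal sequence `e_n` to a null sequence, while
`⟪e_{n+k}, T_f e_n⟫ = f̂(k)` once `n, n + k ≥ 0`; hence a compact `T_f` has no nonzero Fourier
coefficient, and `f = 0`.
-/

open MeasureTheory AddCircle ContinuousLinearMap Filter Topology

theorem IsIdempotentElem.compression_mul_compression_sub_compression_mul {R : Type*} [Ring R]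
    {p : R} (hp : IsIdempotentElem p) (a b : R) :
    p * a * p * (p * b * p) - p * (a * b) * p = -(p * a * ((1 - p) * b * p)) := by
  calc p * a * p * (p * b * p) - p * (a * b) * p
      = p * a * (p * p) * b * p - p * a * b * p := by noncomm_ring
    _ = -(p * a * ((1 - p) * b * p)) := by rw [hp.eq]; noncomm_ring

section CompactOperators

variable {𝕜 E F : Type*} [RCLike 𝕜] [NormedAddCommGroup E] [InnerProductSpace 𝕜 E]

local notation "⟪" x ", " y "⟫" => @inner 𝕜 _ _ x y

theorem Orthonormal.tendsto_inner_cofinite_zero {ι : Type*} {e : ι → E} (he : Orthonormal 𝕜 e)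
    (x : E) : Tendsto (fun i => ⟪e i, x⟫) cofinite (𝓝 0) := by
  have h := (Real.continuous_sqrt.tendsto 0).comp
    (he.inner_products_summable (x := x)).tendsto_cofinite_zero
  rw [tendsto_zero_iff_norm_tendsto_zero]
  simpa [Function.comp_def, Real.sqrt_sq (norm_nonneg _)] using h

variable [NormedAddCommGroup F]

theorem isCompactOperator_smulRight [NormedSpace 𝕜 F] (φ : E →L[𝕜] 𝕜) (y : F) :
    IsCompactOperator (φ.smulRight y) :=
  (isCompactOperator_of_locallyCompactSpace_dom φ).continuous_comp
    (continuous_id.smul continuous_const)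

theorem HilbertBasis.isCompactOperator_of_apply_eq_zero [NormedSpace 𝕜 F] {ι : Type*}
    (b : HilbertBasis ι 𝕜 E) {T : E →L[𝕜] F} (s : Finset ι) (hT : ∀ i ∉ s, T (b i) = 0) :
    IsCompactOperator T := by
  classical
  have hsum : T = ∑ i ∈ s, (innerSL 𝕜 (b i)).smulRight (T (b i)) := by
    refine ext_on (Submodule.dense_iff_topologicalClosure_eq_top.mpr b.dense_span) ?_
    rintro _ ⟨j, rfl⟩
    simp only [sum_apply, smulRight_apply, innerSL_apply_apply,
      orthonormal_iff_ite.mp b.orthonormal, ite_smul, one_smul, zero_smul, Finset.sum_ite_eq']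
    split_ifs with hj
    · rfl
    · exact hT j hj
  rw [hsum]
  exact (compactOperator _ E F).sum_mem fun i _ => isCompactOperator_smulRight _ _

theorem isCompactOperator_of_dense_span {X : Type*} [NormedAddCommGroup X] [NormedSpace 𝕜 X]
    [NormedSpace 𝕜 F] [CompleteSpace F] (Φ : X →L[𝕜] E →L[𝕜] F) {s : Set X}
    (hs : Dense (Submodule.span 𝕜 s : Set X)) (h : ∀ a ∈ s, IsCompactOperator (Φ a)) (a : X) :
    IsCompactOperator (Φ a) :=
  hs.induction (P := fun a => IsCompactOperator (Φ a))
    (fun _ ha => (Submodule.span_le (p := (compactOperator _ E F).comap Φ.toLinearMap)).mpr h ha)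
    (isClosed_setOfPred_isCompactOperator.preimage Φ.continuous) a

variable [InnerProductSpace 𝕜 F] [CompleteSpace E] [CompleteSpace F]

theorem IsCompactOperator.tendsto_apply_orthonormal {ι : Type*} {T : E →L[𝕜] F}
    (hT : IsCompactOperator T) {e : ι → E} (he : Orthonormal 𝕜 e) :
    Tendsto (fun i => T (e i)) cofinite (𝓝 0) := by
  obtain ⟨K, hK, hTK⟩ := hT.image_closedBall_subset_compact (f := T.toLinearMap) 1
  refine hK.tendsto_nhds_of_unique_mapClusterPt
    (Eventually.of_forall fun i => hTK ⟨e i, by simp [he.1 i], rfl⟩) fun y _ hy => ?_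
  have hweak : Tendsto (fun i => ⟪y, T (e i)⟫) cofinite (𝓝 0) := by
    refine ((continuous_star.tendsto' 0 0 (star_zero 𝕜)).comp
      (he.tendsto_inner_cofinite_zero (adjoint T y))).congr fun i => ?_
    simp [← adjoint_inner_left T]
  have hyy : MapClusterPt ⟪y, y⟫ cofinite (fun i => ⟪y, T (e i)⟫) :=
    hy.tendsto_comp ((continuous_const.inner continuous_id).tendsto y)
  exact inner_self_eq_zero.mp (eq_of_nhds_neBot (ClusterPt.mono hyy hweak).neBot)

end CompactOperators

section MultiplicationOperator

variable {X 𝕜 : Type*} [TopologicalSpace X] [MeasurableSpace X] [RCLike 𝕜] {μ : Measure X}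
  {p : ENNReal} [Fact (1 ≤ p)]

def IsMultiplicationOperator (μ : Measure X) (M : C(X, 𝕜) → Lp 𝕜 p μ →L[𝕜] Lp 𝕜 p μ) : Prop :=
  ∀ f u, (M f u : X → 𝕜) =ᵐ[μ] fun z => f z * u z

namespace IsMultiplicationOperator

variable {M : C(X, 𝕜) → Lp 𝕜 p μ →L[𝕜] Lp 𝕜 p μ} (hM : IsMultiplicationOperator μ M)
include hM

theorem map_mul (f g : C(X, 𝕜)) : M (f * g) = M f * M g := by
  ext1 u
  refine Lp.ext ?_
  filter_upwards [hM (f * g) u, hM f (M g u), hM g u] with z hfg hf hg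
  rw [mul_apply_eq_comp, hfg, hf, hg, ContinuousMap.mul_apply, mul_assoc]

theorem map_add (f g : C(X, 𝕜)) : M (f + g) = M f + M g := by
  ext1 u
  refine Lp.ext ?_
  filter_upwards [hM (f + g) u, hM f u, hM g u, Lp.coeFn_add (M f u) (M g u)] with z hfg hf hg hadd
  rw [add_apply, hadd, hfg, Pi.add_apply, hf, hg, ContinuousMap.add_apply, add_mul]

theorem map_smul (c : 𝕜) (f : C(X, 𝕜)) : M (c • f) = c • M f := by
  ext1 u
  refine Lp.ext ?_
  filter_upwards [hM (c • f) u, hM f u, Lp.coeFn_smul c (M f u)] with z hcf hf hsmul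
  rw [smul_apply, hsmul, hcf, Pi.smul_apply, hf, ContinuousMap.smul_apply, smul_eq_mul,
    smul_eq_mul, mul_assoc]

theorem norm_apply_le [CompactSpace X] (f : C(X, 𝕜)) (u : Lp 𝕜 p μ) : ‖M f u‖ ≤ ‖f‖ * ‖u‖ := by
  have h : eLpNorm (M f u) p μ ≤ ‖f‖₊ • eLpNorm u p μ := by
    rw [eLpNorm_congr_ae (hM f u)]
    refine eLpNorm_le_nnreal_smul_eLpNorm_of_ae_le_mul (Eventually.of_forall fun z => ?_) _
    rw [nnnorm_mul]
    exact mul_le_mul_left (by exact_mod_cast f.norm_coe_le_norm z) _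
  rw [Lp.norm_def, Lp.norm_def, ← ENNReal.toReal_ofReal (norm_nonneg f), ← ENNReal.toReal_mul]
  refine ENNReal.toReal_mono (ENNReal.mul_ne_top ENNReal.ofReal_ne_top (Lp.eLpNorm_ne_top u)) ?_
  simpa [ENNReal.smul_def, ofReal_norm, enorm_eq_nnnorm] using h

noncomputable def toContinuousLinearMap [CompactSpace X] :
    C(X, 𝕜) →L[𝕜] Lp 𝕜 p μ →L[𝕜] Lp 𝕜 p μ :=
  LinearMap.mkContinuous { toFun := M, map_add' := hM.map_add, map_smul' := hM.map_smul } 1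
    fun f => by
      rw [one_mul]
      exact opNorm_le_bound _ (norm_nonneg f) (hM.norm_apply_le f)

end IsMultiplicationOperator
end MultiplicationOperator

section Fourier

variable {T : ℝ} [hT : Fact (0 < T)]

theorem ContinuousMap.eq_zero_of_forall_fourierCoeff_eq_zero {f : C(AddCircle T, ℂ)}
    (h : ∀ n, fourierCoeff f n = 0) : f = 0 := by
  refine ContinuousMap.toLp_injective (p := 2) (𝕜 := ℂ) haarAddCircle ?_
  refine fourierBasis.repr.injective (lp.ext (funext fun n => ?_))
  rw [map_zero, map_zero, fourierBasis_repr, fourierCoeff_toLp, h, lp.coeFn_zero, Pi.zero_apply]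

namespace IsMultiplicationOperator

variable {M : C(AddCircle T, ℂ) → Lp ℂ 2 (@haarAddCircle T hT) →L[ℂ] Lp ℂ 2 (@haarAddCircle T hT)}
  (hM : IsMultiplicationOperator haarAddCircle M)
include hM

theorem apply_fourierLp (k n : ℤ) : M (fourier k) (fourierLp 2 n) = fourierLp 2 (k + n) := by
  refine Lp.ext ?_
  filter_upwards [hM (fourier k) (fourierLp 2 n), coeFn_fourierLp 2 n, coeFn_fourierLp 2 (k + n)]
    with z hz hn hkn
  rw [hz, hn, hkn, fourier_add]

theorem inner_fourierLp_apply_fourierLp (f : C(AddCircle T, ℂ)) (m n : ℤ) :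
    inner ℂ (fourierLp 2 m) (M f (fourierLp 2 n)) = fourierCoeff f (m - n) := by
  rw [L2.inner_def, fourierCoeff]
  refine integral_congr_ae ?_
  filter_upwards [coeFn_fourierLp 2 m, coeFn_fourierLp 2 n, hM f (fourierLp 2 n)] with z hm hn hf
  rw [RCLike.inner_apply, hm, hf, hn, ← fourier_neg, neg_sub, sub_eq_add_neg, fourier_add,
    smul_eq_mul]
  ring

end IsMultiplicationOperator

def IsHardyProjection (P : Lp ℂ 2 (@haarAddCircle T hT) →L[ℂ] Lp ℂ 2 (@haarAddCircle T hT)) :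
    Prop :=
  IsStarProjection P ∧ LinearMap.range P.toLinearMap =
    (Submodule.span ℂ (Set.range fun n : ℕ => fourierLp (T := T) 2 (n : ℤ))).topologicalClosure

namespace IsHardyProjection

variable {P : Lp ℂ 2 (@haarAddCircle T hT) →L[ℂ] Lp ℂ 2 (@haarAddCircle T hT)}
  (hP : IsHardyProjection P)
include hP

theorem apply_fourierLp_of_nonneg {n : ℤ} (hn : 0 ≤ n) : P (fourierLp 2 n) = fourierLp 2 n := by
  obtain ⟨_, hPeq⟩ := isStarProjection_iff_eq_starProjection_range.mp hP.1
  rw [hPeq, Submodule.starProjection_eq_self_iff]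
  show _ ∈ LinearMap.range P.toLinearMap
  rw [hP.2]
  exact Submodule.le_topologicalClosure _ (Submodule.subset_span ⟨n.toNat, by simp [hn]⟩)

theorem apply_fourierLp_of_neg {n : ℤ} (hn : n < 0) : P (fourierLp (T := T) 2 n) = 0 := by
  obtain ⟨_, hPeq⟩ := isStarProjection_iff_eq_starProjection_range.mp hP.1
  rw [hPeq, Submodule.starProjection_apply_eq_zero_iff]
  show _ ∈ (LinearMap.range P.toLinearMap)ᗮ
  rw [hP.2, Submodule.orthogonal_closure]
  refine Submodule.isOrtho_iff_le.mp (Submodule.isOrtho_span.mpr ?_)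
    (Submodule.mem_span_singleton_self _)
  rintro _ rfl _ ⟨m, rfl⟩
  exact (orthonormal_iff_ite.mp (orthonormal_fourier (T := T))) n m ▸ if_neg (by omega)

variable {M : C(AddCircle T, ℂ) → Lp ℂ 2 (@haarAddCircle T hT) →L[ℂ] Lp ℂ 2 (@haarAddCircle T hT)}
  (hM : IsMultiplicationOperator haarAddCircle M)
include hM

theorem isCompactOperator_hankel_fourier (k : ℤ) :
    IsCompactOperator ⇑((1 - P) * M (fourier k) * P) := by
  refine fourierBasis.isCompactOperator_of_apply_eq_zero (Finset.Ico 0 (-k)) fun n hn => ?_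
  rw [coe_fourierBasis, mul_apply_eq_comp, mul_apply_eq_comp]
  rcases lt_or_ge n 0 with hn0 | hn0
  · rw [hP.apply_fourierLp_of_neg hn0, map_zero, map_zero]
  · have hkn : 0 ≤ k + n := by
      rw [Finset.mem_Ico, not_and_or] at hn
      omega
    rw [hP.apply_fourierLp_of_nonneg hn0, hM.apply_fourierLp, sub_apply, one_apply_eq_self,
      hP.apply_fourierLp_of_nonneg hkn, sub_self]

theorem isCompactOperator_hankel (f : C(AddCircle T, ℂ)) :
    IsCompactOperator ⇑((1 - P) * M f * P) :=
  isCompactOperator_of_dense_span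
    (((mul ℂ _).flip P).comp ((mul ℂ _ (1 - P)).comp hM.toContinuousLinearMap))
    (Submodule.dense_iff_topologicalClosure_eq_top.mpr span_fourier_closure_eq_top)
    (by rintro _ ⟨k, rfl⟩; exact hP.isCompactOperator_hankel_fourier hM k) f

theorem inner_fourierLp_toeplitz (f : C(AddCircle T, ℂ)) {m n : ℤ} (hm : 0 ≤ m) (hn : 0 ≤ n) :
    inner ℂ (fourierLp 2 m) ((P * M f * P) (fourierLp 2 n)) = fourierCoeff f (m - n) := by
  rw [mul_apply_eq_comp, mul_apply_eq_comp, hP.apply_fourierLp_of_nonneg hn,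
    ← adjoint_inner_left, hP.1.isSelfAdjoint.adjoint_eq, hP.apply_fourierLp_of_nonneg hm,
    hM.inner_fourierLp_apply_fourierLp]

theorem eq_zero_of_isCompactOperator_toeplitz {f : C(AddCircle T, ℂ)}
    (hK : IsCompactOperator ⇑(P * M f * P)) : f = 0 := by
  have hlim : Tendsto (fun n : ℤ => ‖(P * M f * P) (fourierLp 2 n)‖) atTop (𝓝 0) :=
    tendsto_zero_iff_norm_tendsto_zero.mp
      ((hK.tendsto_apply_orthonormal orthonormal_fourier).mono_left atTop_le_cofinite)
  refine ContinuousMap.eq_zero_of_forall_fourierCoeff_eq_zero fun k => norm_le_zero_iff.mp ?_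
  refine ge_of_tendsto hlim ?_
  filter_upwards [eventually_ge_atTop (max 0 (-k))] with n hn
  calc ‖fourierCoeff f k‖
      = ‖inner ℂ (fourierLp 2 (k + n)) ((P * M f * P) (fourierLp 2 n))‖ := by
        rw [hP.inner_fourierLp_toeplitz hM f (by omega) (by omega), add_sub_cancel_right]
    _ ≤ ‖fourierLp (T := T) 2 (k + n)‖ * ‖(P * M f * P) (fourierLp 2 n)‖ :=
        norm_inner_le_norm _ _
    _ = ‖(P * M f * P) (fourierLp 2 n)‖ := by rw [orthonormal_fourier.1, one_mul]

end IsHardyProjection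

end Fourier

/-- For continuous functions `f, g` on the circle, the Toeplitz operators
`T_f = P M_f P` on the Hardy space (realised via the Hardy projection `P` of `L²(S¹)`
onto the closed span of the nonnegative Fourier modes, with `M_f` the multiplication
operator by `f`) satisfy: `T_f T_g - T_{fg}` is compact, and `T_f` is compact iff
`f = 0`. -/
theorem toeplitz_operators_hardy
    [hT : Fact (0 < 2 * Real.pi)]
    (M : C(AddCircle (2 * Real.pi), ℂ) →
      Lp ℂ 2 (@haarAddCircle (2 * Real.pi) hT) →L[ℂ] Lp ℂ 2 (@haarAddCircle (2 * Real.pi) hT))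
    (hM : ∀ (f : C(AddCircle (2 * Real.pi), ℂ)) (u : Lp ℂ 2 (@haarAddCircle (2 * Real.pi) hT)),
      (M f u : AddCircle (2 * Real.pi) → ℂ) =ᵐ[haarAddCircle] fun z => f z * u z)
    (P : Lp ℂ 2 (@haarAddCircle (2 * Real.pi) hT) →L[ℂ] Lp ℂ 2 (@haarAddCircle (2 * Real.pi) hT))
    (hPsa : IsSelfAdjoint P) (hPidem : IsIdempotentElem P)
    (hPrange : LinearMap.range P.toLinearMap =
      (Submodule.span ℂ (Set.range fun n : ℕ => @fourierLp (2 * Real.pi) hT 2 _ (n : ℤ))).topologicalClosure)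
    (f g : C(AddCircle (2 * Real.pi), ℂ)) :
    IsCompactOperator ⇑(P * M f * P * (P * M g * P) - P * M (f * g) * P) ∧
    (IsCompactOperator ⇑(P * M f * P) ↔ f = 0) := by
  have hMul : IsMultiplicationOperator haarAddCircle M := hM
  have hP : IsHardyProjection P := ⟨⟨hPidem, hPsa⟩, hPrange⟩
  refine ⟨?_, hP.eq_zero_of_isCompactOperator_toeplitz hMul, ?_⟩
  · rw [hMul.map_mul, hPidem.compression_mul_compression_sub_compression_mul]
    exact ((hP.isCompactOperator_hankel hMul g).clm_comp (P * M f)).neg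
  · rintro rfl
    rw [show M 0 = 0 from map_zero hMul.toContinuousLinearMap, mul_zero, zero_mul]
    exact isCompactOperator_zero
end

section
/- Let X be a Hilbert B-module, Y a Hilbert B-module with a *-homomorphism π : A → End*_B(Y), v : X → Y an adjointable isometry (v*v = 1), and ℓ(a) := v*π(a)v a completely positive splitting such that ℓ(a)ℓ(a*) - ℓ(aa*) ∈ K(X) for all a ∈ A. Then with F := 2vv* - 1, one has F = F*, F² = 1, and [F, π(a)] ∈ K(Y) for all a ∈ A, i.e., (Y, F) is an odd Kasparov (A,B)-module. -/
/-!
Write `q = 1 - p`. Then `[2p - 1, π a] = 2 (p π(a) q - q π(a) p)`, and the hypothesis on `ℓ` says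
exactly that `(q π(b) p)* (q π(b) p) = p π(b* b) p - p π(b*) p π(b) p` lies in `K` for every `b`.
In a C⋆-algebra an element `x` lies in a closed left ideal as soon as `x* x` does: with
`h = x* x` and `r_δ = δ (h + δ)⁻¹`, the element `x - x r_δ` lies in the ideal and
`‖x r_δ‖² = ‖r_δ h r_δ‖ ≤ δ`. Closed two-sided ideals are therefore self-adjoint, which also puts
`p π(a) q = (q π(a*) p)*` into `K`.
-/

lemma mul_inv_add_mul_mul_mul_inv_add_le {δ t : ℝ} (hδ : 0 < δ) (ht : 0 ≤ t) :
    δ * (t + δ)⁻¹ * t * (δ * (t + δ)⁻¹) ≤ δ := by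
  have hs : 0 < t + δ := by linarith
  rw [show δ * (t + δ)⁻¹ * t * (δ * (t + δ)⁻¹) = δ ^ 2 * t / (t + δ) ^ 2 by field_simp,
    div_le_iff₀ (by positivity)]
  nlinarith [mul_nonneg hδ.le (sq_nonneg t), mul_nonneg (mul_nonneg hδ.le hδ.le) ht,
    mul_nonneg (mul_nonneg hδ.le hδ.le) hδ.le]

section CStarAlgebra

variable {A : Type*} [CStarAlgebra A]

lemma continuousOn_inv_add_spectrum_star_mul_self (x : A) {δ : ℝ} (hδ : 0 < δ) :
    ContinuousOn (fun t : ℝ => (t + δ)⁻¹) (spectrum ℝ (star x * x)) :=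
  ContinuousOn.inv₀ (by fun_prop) fun t ht =>
    (add_pos_of_nonneg_of_pos (spectrum_star_mul_self_nonneg t ht) hδ).ne'

lemma one_sub_cfc_mul_inv_add_star_mul_self (x : A) {δ : ℝ} (hδ : 0 < δ) :
    1 - cfc (fun t : ℝ => δ * (t + δ)⁻¹) (star x * x)
      = cfc (fun t : ℝ => (t + δ)⁻¹) (star x * x) * (star x * x) := by
  set h := star x * x
  have hinv := continuousOn_inv_add_spectrum_star_mul_self x hδ
  have hf : ContinuousOn (fun t : ℝ => δ * (t + δ)⁻¹) (spectrum ℝ h) :=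
    continuousOn_const.mul hinv
  calc 1 - cfc (fun t : ℝ => δ * (t + δ)⁻¹) h
      = cfc (fun t : ℝ => 1 - δ * (t + δ)⁻¹) h := by
        rw [cfc_sub (fun _ => 1) _ h continuousOn_const hf, cfc_const_one ℝ h]
    _ = cfc (fun t : ℝ => (t + δ)⁻¹ * t) h := cfc_congr fun t ht => by
        have := (add_pos_of_nonneg_of_pos (spectrum_star_mul_self_nonneg t ht) hδ).ne'
        field_simp
        ring
    _ = cfc (fun t : ℝ => (t + δ)⁻¹) h * h := by
        rw [cfc_mul _ (fun t : ℝ => t) h hinv (continuousOn_id' _), cfc_id' ℝ h]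

lemma norm_mul_cfc_mul_inv_add_star_mul_self_sq_le (x : A) {δ : ℝ} (hδ : 0 < δ) :
    ‖x * cfc (fun t : ℝ => δ * (t + δ)⁻¹) (star x * x)‖ ^ 2 ≤ δ := by
  set h := star x * x
  set f : ℝ → ℝ := fun t => δ * (t + δ)⁻¹
  have hf : ContinuousOn f (spectrum ℝ h) :=
    continuousOn_const.mul (continuousOn_inv_add_spectrum_star_mul_self x hδ)
  have hfid : ContinuousOn (fun t => f t * t) (spectrum ℝ h) := hf.mul (continuousOn_id' _)
  have hconj : star (x * cfc f h) * (x * cfc f h) = cfc (fun t => f t * t * f t) h := by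
    rw [cfc_mul _ f h hfid hf, cfc_mul f (fun t : ℝ => t) h hf (continuousOn_id' _),
      cfc_id' ℝ h, star_mul, (cfc_predicate f h).star_eq]
    simp only [h, mul_assoc]
  rw [sq, ← CStarRing.norm_star_mul_self, hconj]
  refine norm_cfc_le hδ.le fun t ht => ?_
  have ht₀ : 0 ≤ t := spectrum_star_mul_self_nonneg t ht
  rw [Real.norm_of_nonneg (by positivity)]
  exact mul_inv_add_mul_mul_mul_inv_add_le hδ ht₀

lemma Ideal.mem_of_star_mul_self_mem {L : Ideal A} (hL : IsClosed (L : Set A)) {x : A}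
    (hx : star x * x ∈ L) : x ∈ L := by
  rw [← SetLike.mem_coe, ← hL.closure_eq, Metric.mem_closure_iff]
  intro ε hε
  have hδ : 0 < ε ^ 2 / 2 := by positivity
  refine ⟨x * cfc (fun t : ℝ => (t + ε ^ 2 / 2)⁻¹) (star x * x) * (star x * x),
    L.mul_mem_left _ hx, ?_⟩
  rw [dist_eq_norm, mul_assoc, ← one_sub_cfc_mul_inv_add_star_mul_self x hδ, mul_sub, mul_one,
    sub_sub_cancel]
  have := norm_mul_cfc_mul_inv_add_star_mul_self_sq_le x hδ
  exact lt_of_pow_lt_pow_left₀ 2 hε.le (by linarith)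

lemma TwoSidedIdeal.star_mem_of_isClosed {I : TwoSidedIdeal A} (hI : IsClosed (I : Set A))
    {x : A} (hx : x ∈ I) : star x ∈ I :=
  TwoSidedIdeal.mem_asIdeal.mp <| Ideal.mem_of_star_mul_self_mem (L := I.asIdeal) hI <| by
    rw [star_star, TwoSidedIdeal.mem_asIdeal]
    exact I.mul_mem_right _ _ hx

end CStarAlgebra

namespace IsStarProjection

variable {R : Type*} [Ring R] [StarRing R] {p : R}

lemma isSelfAdjoint_two_mul_sub_one (hp : IsStarProjection p) : IsSelfAdjoint (2 * p - 1) := by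
  simpa only [two_mul] using (hp.isSelfAdjoint.add hp.isSelfAdjoint).sub (.one R)

lemma two_mul_sub_one_sq (hp : IsStarProjection p) : (2 * p - 1) ^ 2 = 1 := by
  have := Unitary.star_mul_self_of_mem hp.two_mul_sub_one_mem_unitary
  rwa [hp.isSelfAdjoint_two_mul_sub_one.star_eq, ← sq] at this

lemma star_mul_self_one_sub_mul_mul (hp : IsStarProjection p) (y : R) :
    star ((1 - p) * y * p) * ((1 - p) * y * p)
      = -(p * star y * p * y * p - p * (star y * y) * p) := by
  have hpp : p * p = p := hp.isIdempotentElem.eq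
  rw [star_mul, star_mul, star_sub, star_one, hp.isSelfAdjoint.star_eq]
  calc p * (star y * (1 - p)) * ((1 - p) * y * p)
      = p * star y * y * p - 2 * (p * star y * p * y * p) + p * star y * (p * p) * y * p := by
        noncomm_ring
    _ = _ := by rw [hpp]; noncomm_ring

end IsStarProjection

/-- `M` stands for `End*_B(Y)`, `K` for `K(Y)` and `p` for the range projection `vv*`; the corner
`pMp` is `End*_B(X)`, in which `ℓ(a) = v*π(a)v` becomes `p π(a) p`. -/
theorem stinespring_dilation_gives_kasparov_module_general
    {M : Type*} [NormedRing M] [StarRing M] [CStarRing M] [CompleteSpace M]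
    [NormedAlgebra ℂ M] [StarModule ℂ M]
    {A : Type*} [NormedRing A] [StarRing A]
    [NormedAlgebra ℂ A]
    (K : Submodule ℂ M) (hKclosed : IsClosed (K : Set M))
    (hKleft : ∀ (x k : M), k ∈ K → x * k ∈ K)
    (hKright : ∀ (x k : M), k ∈ K → k * x ∈ K)
    (π : A →⋆ₐ[ℂ] M)
    (p : M) (hpsa : IsSelfAdjoint p) (hpidem : IsIdempotentElem p)
    (hℓ : ∀ a : A, p * π a * p * π (star a) * p - p * π (a * star a) * p ∈ K) :
    IsSelfAdjoint (2 * p - 1) ∧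
    (2 * p - 1) ^ 2 = 1 ∧
    ∀ a : A, (2 * p - 1) * π a - π a * (2 * p - 1) ∈ K := by
  let _ : CStarAlgebra M := {}
  have hp : IsStarProjection p := ⟨hpidem, hpsa⟩
  let I : TwoSidedIdeal M := .mk' K K.zero_mem K.add_mem K.neg_mem (hKleft _ _) (hKright _ _)
  have hI : IsClosed (I : Set M) := by rwa [TwoSidedIdeal.coe_mk']
  have hoff : ∀ b : A, (1 - p) * π b * p ∈ I := fun b =>
    TwoSidedIdeal.mem_asIdeal.mp <| Ideal.mem_of_star_mul_self_mem (L := I.asIdeal) hI <| by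
      rw [TwoSidedIdeal.mem_asIdeal, hp.star_mul_self_one_sub_mul_mul, ← map_star, ← map_mul]
      have hb := hℓ (star b)
      rw [star_star] at hb
      simpa [I] using K.neg_mem hb
  refine ⟨hp.isSelfAdjoint_two_mul_sub_one, hp.two_mul_sub_one_sq, fun a => ?_⟩
  have hcomm : (2 * p - 1) * π a - π a * (2 * p - 1)
      = 2 * star ((1 - p) * π (star a) * p) - 2 * ((1 - p) * π a * p) := by
    rw [star_mul, star_mul, map_star, star_star, hpsa.star_eq, star_sub, star_one, hpsa.star_eq]
    noncomm_ring
  have hmem : 2 * star ((1 - p) * π (star a) * p) - 2 * ((1 - p) * π a * p) ∈ I :=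
    I.sub_mem (I.mul_mem_left 2 _ (TwoSidedIdeal.star_mem_of_isClosed hI (hoff (star a))))
      (I.mul_mem_left 2 _ (hoff a))
  simpa [I, hcomm] using hmem

/-- Abstract form of the Kasparov–Stinespring construction of an odd Kasparov
`(A,B)`-module from a semisplit extension.  Here `M` plays the role of the adjointable
operators `End*_B(Y)` on the Hilbert `B`-module `Y`, `K` the closed two-sided ideal of
compact endomorphisms `K(Y)`, `π : A → M` the left `A`-action, and `p = vv*` the range
projection of the isometry `v : X → Y`, so that the corner `pMp` is `End*_B(X)`,
`ℓ(a) = v*π(a)v` corresponds to `p π(a) p`, and the hypothesis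
`ℓ(a)ℓ(a*) - ℓ(aa*) ∈ K(X)` reads `p π(a) p π(a*) p - p π(aa*) p ∈ K`.  Then
`F := 2vv* - 1 = 2p - 1` satisfies `F = F*`, `F² = 1` and `[F, π(a)] ∈ K` for all
`a ∈ A`, i.e. `(Y, F)` is an odd Kasparov `(A,B)`-module. -/
theorem stinespring_dilation_gives_kasparov_module
    {M : Type*} [NormedRing M] [StarRing M] [CStarRing M] [CompleteSpace M]
    [NormedAlgebra ℂ M] [StarModule ℂ M]
    {A : Type*} [NormedRing A] [StarRing A] [CStarRing A] [CompleteSpace A]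
    [NormedAlgebra ℂ A] [StarModule ℂ A]
    (K : Submodule ℂ M) (hKclosed : IsClosed (K : Set M))
    (hKleft : ∀ (x k : M), k ∈ K → x * k ∈ K)
    (hKright : ∀ (x k : M), k ∈ K → k * x ∈ K)
    (π : A →⋆ₐ[ℂ] M)
    (p : M) (hpsa : IsSelfAdjoint p) (hpidem : IsIdempotentElem p)
    (hℓ : ∀ a : A, p * π a * p * π (star a) * p - p * π (a * star a) * p ∈ K) :
    IsSelfAdjoint (2 * p - 1) ∧
    (2 * p - 1) ^ 2 = 1 ∧
    ∀ a : A, (2 * p - 1) * π a - π a * (2 * p - 1) ∈ K :=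
  stinespring_dilation_gives_kasparov_module_general K hKclosed hKleft hKright π p hpsa hpidem hℓ
end
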